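/- Let V be a variety and F, G monotone global operators on V for reflexive admissible relations satisfying the homomorphism property. Suppose that in the free algebra X of V on three generators x, y, z one has S ∘ S ⊆ F_X(S) ∘ S ∘ G_X(S), where S is the smallest reflexive admissible relation on X containing both (x,y) and (y,z). Then V has a ternary term t that is Mal'cev modulo F_A and G_A in every algebra A of V. -/

import Mathlib

structure Signature where
  symbols : Type
  arity : symbols → ℕ

structure UAAlgebra (σ : Signature) where
  carrier : Type
  ops : ∀ s, (Fin (σ.arity s) → carrier) → carrier

namespace Paper

variable {σ : Signature}

/-- Binary relations on the carrier of an algebra. -/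
abbrev Rel (A : UAAlgebra σ) := A.carrier → A.carrier → Prop

/-- A relation is admissible (compatible) if it is preserved by all operations,
i.e. it is a subalgebra of `A × A`. -/
def Compatible (A : UAAlgebra σ) (R : Rel A) : Prop :=
  ∀ s (f g : Fin (σ.arity s) → A.carrier),
    (∀ j, R (f j) (g j)) → R (A.ops s f) (A.ops s g)

/-- Reflexive and admissible. -/
def RAdm (A : UAAlgebra σ) (R : Rel A) : Prop :=
  Reflexive R ∧ Compatible A R

/-- Relational composition. -/
def comp {A : UAAlgebra σ} (R S : Rel A) : Rel A :=
  fun a c => ∃ b, R a b ∧ S b c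

/-- `cl A X` : the least compatible relation containing `X`. -/
def cl (A : UAAlgebra σ) (X : Rel A) : Rel A :=
  fun a b => ∀ S : Rel A, Compatible A S → (∀ x y, X x y → S x y) → S a b

/-- The least reflexive compatible relation containing `X`. -/
def clRefl (A : UAAlgebra σ) (X : Rel A) : Rel A :=
  fun a b => ∀ S : Rel A, Reflexive S → Compatible A S → (∀ x y, X x y → S x y) → S a b

/-- `altComp R S n` is `R ∘ₙ S`, the alternating composition
`R ∘ S ∘ R ∘ ⋯` with `n` factors (`n - 1` occurrences of `∘`);
by convention `R ∘₀ S` is the identity relation. -/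
def altComp {A : UAAlgebra σ} (R S : Rel A) : ℕ → Rel A
  | 0 => Eq
  | n + 1 => comp R (altComp S R n)

/-- `relPow R n = Rⁿ`, with `R⁰` the identity relation. -/
def relPow {A : UAAlgebra σ} (R : Rel A) : ℕ → Rel A
  | 0 => Eq
  | n + 1 => comp R (relPow R n)

/-- The join `R + S = ⋃ₙ R ∘ₙ S`. -/
def join {A : UAAlgebra σ} (R S : Rel A) : Rel A :=
  fun a b => ∃ n, altComp R S n a b

/-- Converse relation `R⁻`. -/
def conv {A : UAAlgebra σ} (R : Rel A) : Rel A :=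
  fun a b => R b a

/-- Composition of a finite list of relations (empty list gives the identity). -/
def compList {A : UAAlgebra σ} : List (Rel A) → Rel A
  | [] => Eq
  | r :: l => comp r (compList l)

/-- Join of a family of relations: the union of all finite compositions of members. -/
def joinFam {A : UAAlgebra σ} {ι : Type} (R : ι → Rel A) : Rel A :=
  fun a b => ∃ l : List ι, compList (l.map R) a b

/-- The smallest congruence containing `X`. -/
def cg (A : UAAlgebra σ) (X : Rel A) : Rel A :=
  fun a b => ∀ S : Rel A, Equivalence S → Compatible A S →
    (∀ x y, X x y → S x y) → S a b

/-- Terms of the signature `σ` in `n` variables. -/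
inductive Term (σ : Signature) (n : ℕ) : Type
  | var : Fin n → Term σ n
  | op : ∀ s, (Fin (σ.arity s) → Term σ n) → Term σ n

/-- Evaluation of a term in an algebra under an environment. -/
def Term.eval {n : ℕ} (A : UAAlgebra σ) (env : Fin n → A.carrier) : Term σ n → A.carrier
  | .var k => env k
  | .op s args => A.ops s fun j => (args j).eval A env

/-- The ternary term operation induced by a ternary term. -/
def tApp (A : UAAlgebra σ) (t : Term σ 3) (a b c : A.carrier) : A.carrier :=
  t.eval A ![a, b, c]

/-- `t` is Mal'cev modulo `F` and `G`: whenever `a R b` with `R` reflexive admissible,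
`a F(R) t(a,b,b)` and `t(a,a,b) G(R) b`. -/
def MalcevMod (A : UAAlgebra σ) (F G : Rel A → Rel A) (t : Term σ 3) : Prop :=
  ∀ R : Rel A, RAdm A R → ∀ a b : A.carrier, R a b →
    F R a (tApp A t a b b) ∧ G R (tApp A t a a b) b

end Paper

open Paper

namespace Paper

variable {σ : Signature}

/-- A set of equations (each in some number of variables). -/
abbrev EqTheory (σ : Signature) := Set (Σ n : ℕ, Term σ n × Term σ n)

/-- `A` belongs to the variety axiomatized by `E`. -/
def Satisfies (A : UAAlgebra σ) (E : EqTheory σ) : Prop :=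
  ∀ e ∈ E, ∀ env : Fin e.1 → A.carrier, e.2.1.eval A env = e.2.2.eval A env

/-- Homomorphisms of algebras. -/
structure Hom (A B : UAAlgebra σ) where
  toFun : A.carrier → B.carrier
  map_ops : ∀ s f, toFun (A.ops s f) = B.ops s (toFun ∘ f)

/-- `φ(R)`: the smallest reflexive compatible relation on the codomain containing
`{(φ b, φ c) : b R c}`. -/
def mapRel {A B : UAAlgebra σ} (φ : Hom A B) (R : Rel A) : Rel B :=
  clRefl B (fun x y => ∃ a b, R a b ∧ φ.toFun a = x ∧ φ.toFun b = y)

/-- `X` with distinguished elements `x, y` is the free algebra on two generators in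
the variety of `E`. -/
def IsFree2 (E : EqTheory σ) (X : UAAlgebra σ) (x y : X.carrier) : Prop :=
  Satisfies X E ∧ ∀ A : UAAlgebra σ, Satisfies A E → ∀ a b : A.carrier,
    ∃! φ : Hom X A, φ.toFun x = a ∧ φ.toFun y = b

/-- `X` with `x, y, z` is the free algebra on three generators in the variety of `E`. -/
def IsFree3 (E : EqTheory σ) (X : UAAlgebra σ) (x y z : X.carrier) : Prop :=
  Satisfies X E ∧ ∀ A : UAAlgebra σ, Satisfies A E → ∀ a b c : A.carrier,
    ∃! φ : Hom X A, φ.toFun x = a ∧ φ.toFun y = b ∧ φ.toFun z = c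

/-- A global operator for reflexive admissible relations on the variety of `E`,
mapping reflexive admissible relations to reflexive admissible relations. -/
def GlobalOp (E : EqTheory σ)
    (F : ∀ A : UAAlgebra σ, Satisfies A E → Rel A → Rel A) : Prop :=
  ∀ (A : UAAlgebra σ) (hA : Satisfies A E) (R : Rel A), RAdm A R → RAdm A (F A hA R)

/-- Monotonicity of a global operator. -/
def MonotoneOp (E : EqTheory σ)
    (F : ∀ A : UAAlgebra σ, Satisfies A E → Rel A → Rel A) : Prop :=
  ∀ (A : UAAlgebra σ) (hA : Satisfies A E) (R S : Rel A), RAdm A R → RAdm A S →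
    (∀ a b, R a b → S a b) → ∀ a b, F A hA R a b → F A hA S a b

/-- The homomorphism property: `φ(F_B(R)) ⊆ F_A(φ(R))`. -/
def HomProp (E : EqTheory σ)
    (F : ∀ A : UAAlgebra σ, Satisfies A E → Rel A → Rel A) : Prop :=
  ∀ (B A : UAAlgebra σ) (hB : Satisfies B E) (hA : Satisfies A E) (φ : Hom B A)
    (R : Rel B), RAdm B R →
    ∀ b c, F B hB R b c → F A hA (mapRel φ R) (φ.toFun b) (φ.toFun c)

end Paper

/-!
The key fact is that in the free algebra `X` the pairs of `S` are exactly the pairs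
`(u(x,y,z,x,y), u(x,y,z,y,z))` for a 5-ary term `u`. The hypothesis applied to `x S y S z`
gives `x F(S) w₁ S w₂ G(S) z`, and writing `(w₁, w₂)` by a term `u` we take
`t(a,b,c) = u(a,b,c,a,c)`. For `a R b`, the homomorphism `x,y,z ↦ a,b,b` sends `w₁` to
`t(a,b,b)` and `S` into `R`, so the homomorphism property and monotonicity turn `x F(S) w₁`
into `a F(R) t(a,b,b)`; symmetrically `x,y,z ↦ a,a,b` turns `w₂ G(S) z` into
`t(a,a,b) G(R) b`.
-/

namespace Paper

variable {σ : Signature}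

def Term.rename {n m : ℕ} (f : Fin n → Fin m) : Term σ n → Term σ m
  | .var k => .var (f k)
  | .op s args => .op s fun j => (args j).rename f

theorem Term.eval_rename {n m : ℕ} (A : UAAlgebra σ) (f : Fin n → Fin m)
    (env : Fin m → A.carrier) (t : Term σ n) :
    (t.rename f).eval A env = t.eval A (env ∘ f) := by
  induction t with
  | var k => rfl
  | op s args ih => exact congrArg (A.ops s) (funext ih)

theorem Hom.map_eval {n : ℕ} {A B : UAAlgebra σ} (φ : Hom A B) (t : Term σ n)
    (env : Fin n → A.carrier) :
    φ.toFun (t.eval A env) = t.eval B (φ.toFun ∘ env) := by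
  induction t with
  | var k => rfl
  | op s args ih => exact (φ.map_ops s _).trans (congrArg (B.ops s) (funext ih))

def Hom.id (A : UAAlgebra σ) : Hom A A := ⟨fun a => a, fun _ _ => rfl⟩

def Hom.comp {A B C : UAAlgebra σ} (g : Hom B C) (f : Hom A B) : Hom A C :=
  ⟨g.toFun ∘ f.toFun, fun s h => by simp only [Function.comp_apply, f.map_ops, g.map_ops]; rfl⟩

theorem Satisfies.of_injective {E : EqTheory σ} {A B : UAAlgebra σ} (φ : Hom B A)
    (hφ : Function.Injective φ.toFun) (hA : Satisfies A E) : Satisfies B E := by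
  intro e he env
  apply hφ
  rw [φ.map_eval, φ.map_eval]
  exact hA e he _

def termClosure (X : UAAlgebra σ) {n : ℕ} (env : Fin n → X.carrier) : UAAlgebra σ where
  carrier := {w : X.carrier // ∃ u : Term σ n, w = u.eval X env}
  ops s f := ⟨X.ops s fun j => (f j).1, by
    choose u hu using fun j => (f j).2
    exact ⟨.op s u, congrArg (X.ops s) (funext hu)⟩⟩

def termClosure.val (X : UAAlgebra σ) {n : ℕ} (env : Fin n → X.carrier) :
    Hom (termClosure X env) X :=
  ⟨Subtype.val, fun _ _ => rfl⟩

theorem clRefl_radm (A : UAAlgebra σ) (Y : Rel A) : RAdm A (clRefl A Y) :=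
  ⟨fun _ _ hr _ _ => hr _, fun s _ _ h S hr hc hb => hc s _ _ fun j => h j S hr hc hb⟩

theorem clRefl_of_rel {A : UAAlgebra σ} {Y : Rel A} {a b : A.carrier} (h : Y a b) :
    clRefl A Y a b :=
  fun _ _ _ hb => hb a b h

theorem clRefl_le {A : UAAlgebra σ} {Y S : Rel A} (hS : RAdm A S)
    (hY : ∀ a b, Y a b → S a b) {a b : A.carrier} (h : clRefl A Y a b) : S a b :=
  h S hS.1 hS.2 hY

theorem clRefl_map_le {A B : UAAlgebra σ} {Y : Rel B} {R : Rel A} (hR : RAdm A R)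
    (φ : Hom B A) (hY : ∀ b c, Y b c → R (φ.toFun b) (φ.toFun c)) {b c : B.carrier}
    (h : clRefl B Y b c) : R (φ.toFun b) (φ.toFun c) := by
  refine clRefl_le (S := fun b c => R (φ.toFun b) (φ.toFun c)) ⟨fun _ => hR.1 _, ?_⟩ hY h
  intro s f g hfg
  simp only [φ.map_ops]
  exact hR.2 s _ _ hfg

theorem clRefl_pair_map_le {A B : UAAlgebra σ} {R : Rel A} (hR : RAdm A R) (φ : Hom B A)
    (x y z : B.carrier) (hxy : R (φ.toFun x) (φ.toFun y)) (hyz : R (φ.toFun y) (φ.toFun z))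
    (p q : B.carrier) (h : clRefl B (fun u v => (u = x ∧ v = y) ∨ (u = y ∧ v = z)) p q) :
    R (φ.toFun p) (φ.toFun q) := by
  refine clRefl_map_le hR φ ?_ h
  rintro _ _ (⟨rfl, rfl⟩ | ⟨rfl, rfl⟩)
  exacts [hxy, hyz]

theorem mapRel_le {A B : UAAlgebra σ} {S : Rel B} {R : Rel A} (hR : RAdm A R)
    (φ : Hom B A) (hS : ∀ b c, S b c → R (φ.toFun b) (φ.toFun c)) {a a' : A.carrier}
    (h : mapRel φ S a a') : R a a' := by
  refine clRefl_le hR ?_ h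
  rintro _ _ ⟨b, c, hbc, rfl, rfl⟩
  exact hS b c hbc

theorem HomProp.map_of_rel_map {E : EqTheory σ}
    {H : ∀ A : UAAlgebra σ, Satisfies A E → Rel A → Rel A}
    (hhom : HomProp E H) (hmono : MonotoneOp E H) {A B : UAAlgebra σ}
    (hB : Satisfies B E) (hA : Satisfies A E) (φ : Hom B A) {S : Rel B} {R : Rel A}
    (hS : RAdm B S) (hR : RAdm A R) (hSR : ∀ b c, S b c → R (φ.toFun b) (φ.toFun c))
    {b c : B.carrier} (h : H B hB S b c) : H A hA R (φ.toFun b) (φ.toFun c) :=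
  hmono A hA _ R (clRefl_radm A _) hR (fun _ _ => mapRel_le hR φ hSR) _ _
    (hhom B A hB hA φ S hS b c h)

namespace IsFree3

variable {E : EqTheory σ} {X : UAAlgebra σ} {x y z : X.carrier}

theorem hom_ext (hfree : IsFree3 E X x y z) {A : UAAlgebra σ} (hA : Satisfies A E)
    {φ ψ : Hom X A} (hx : φ.toFun x = ψ.toFun x) (hy : φ.toFun y = ψ.toFun y)
    (hz : φ.toFun z = ψ.toFun z) : φ.toFun = ψ.toFun := by
  obtain ⟨θ, -, huniq⟩ := hfree.2 A hA (ψ.toFun x) (ψ.toFun y) (ψ.toFun z)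
  rw [huniq φ ⟨hx, hy, hz⟩, huniq ψ ⟨rfl, rfl, rfl⟩]

theorem exists_term_eq (hfree : IsFree3 E X x y z) (w : X.carrier) :
    ∃ u : Term σ 3, w = u.eval X ![x, y, z] := by
  let ι := termClosure.val X ![x, y, z]
  have hB : Satisfies (termClosure X ![x, y, z]) E :=
    .of_injective ι Subtype.val_injective hfree.1
  obtain ⟨ψ, ⟨hψx, hψy, hψz⟩, -⟩ :=
    hfree.2 _ hB ⟨x, .var 0, rfl⟩ ⟨y, .var 1, rfl⟩ ⟨z, .var 2, rfl⟩
  have hιψ : (ι.comp ψ).toFun = (Hom.id X).toFun :=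
    hfree.hom_ext hfree.1 (congrArg Subtype.val hψx) (congrArg Subtype.val hψy)
      (congrArg Subtype.val hψz)
  obtain ⟨u, hu⟩ := (ψ.toFun w).2
  exact ⟨u, (congrFun hιψ w).symm.trans hu⟩

theorem exists_term_of_clRefl (hfree : IsFree3 E X x y z) {p q : X.carrier}
    (h : clRefl X (fun u v => (u = x ∧ v = y) ∨ (u = y ∧ v = z)) p q) :
    ∃ u : Term σ 5, p = u.eval X ![x, y, z, x, y] ∧ q = u.eval X ![x, y, z, y, z] := by
  have hvars : ∀ a b : X.carrier, ![x, y, z, a, b] ∘ Fin.castLE (by norm_num) = ![x, y, z] := by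
    intro a b; funext i; fin_cases i <;> rfl
  refine clRefl_le (S := fun p q => ∃ u : Term σ 5,
    p = u.eval X ![x, y, z, x, y] ∧ q = u.eval X ![x, y, z, y, z]) ⟨?refl, ?compat⟩ ?gens h
  case refl =>
    intro w
    obtain ⟨u, hu⟩ := hfree.exists_term_eq w
    refine ⟨u.rename (Fin.castLE (by norm_num)), ?_, ?_⟩ <;> rw [Term.eval_rename, hvars, hu]
  case compat =>
    intro s f g hfg
    choose u hf hg using hfg
    exact ⟨.op s u, congrArg (X.ops s) (funext hf), congrArg (X.ops s) (funext hg)⟩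
  case gens =>
    rintro _ _ (⟨rfl, rfl⟩ | ⟨rfl, rfl⟩)
    · exact ⟨.var 3, rfl, rfl⟩
    · exact ⟨.var 4, rfl, rfl⟩

end IsFree3

def malcevTerm (u : Term σ 5) : Term σ 3 := u.rename ![0, 1, 2, 0, 2]

theorem tApp_malcevTerm (A : UAAlgebra σ) (u : Term σ 5) (a b c : A.carrier) :
    tApp A (malcevTerm u) a b c = u.eval A ![a, b, c, a, c] := by
  rw [tApp, malcevTerm, Term.eval_rename]
  congr 1; funext i; fin_cases i <;> rfl

theorem Hom.map_eval_vec5 {A B : UAAlgebra σ} (φ : Hom A B) (u : Term σ 5)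
    (a₀ a₁ a₂ a₃ a₄ : A.carrier) :
    φ.toFun (u.eval A ![a₀, a₁, a₂, a₃, a₄]) =
      u.eval B ![φ.toFun a₀, φ.toFun a₁, φ.toFun a₂, φ.toFun a₃, φ.toFun a₄] := by
  rw [φ.map_eval]
  congr 1; funext i; fin_cases i <;> rfl

end Paper

theorem stmt16_general {σ : Signature} (E : EqTheory σ)
    (F G : ∀ A : UAAlgebra σ, Satisfies A E → Rel A → Rel A)
    (hFmono : MonotoneOp E F) (hGmono : MonotoneOp E G)
    (hFhom : HomProp E F) (hGhom : HomProp E G)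
    (X : UAAlgebra σ) (x y z : X.carrier) (hfree : IsFree3 E X x y z)
    (hX : Satisfies X E)
    (hSS : ∀ a c,
      comp (clRefl X (fun u v => (u = x ∧ v = y) ∨ (u = y ∧ v = z)))
        (clRefl X (fun u v => (u = x ∧ v = y) ∨ (u = y ∧ v = z))) a c →
      comp (F X hX (clRefl X (fun u v => (u = x ∧ v = y) ∨ (u = y ∧ v = z))))
        (comp (clRefl X (fun u v => (u = x ∧ v = y) ∨ (u = y ∧ v = z)))
          (G X hX (clRefl X (fun u v => (u = x ∧ v = y) ∨ (u = y ∧ v = z))))) a c) :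
    ∃ t : Term σ 3,
      ∀ (A : UAAlgebra σ) (hA : Satisfies A E), MalcevMod A (F A hA) (G A hA) t := by
  set S := clRefl X (fun u v => (u = x ∧ v = y) ∨ (u = y ∧ v = z))
  have hS : RAdm X S := clRefl_radm X _
  obtain ⟨w₁, hxw₁, w₂, hw₁w₂, hw₂z⟩ :=
    hSS x z ⟨y, clRefl_of_rel (.inl ⟨rfl, rfl⟩), clRefl_of_rel (.inr ⟨rfl, rfl⟩)⟩
  obtain ⟨u, rfl, rfl⟩ := hfree.exists_term_of_clRefl hw₁w₂
  refine ⟨malcevTerm u, fun A hA R hR a b hab => ⟨?_, ?_⟩⟩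
  · obtain ⟨φ, ⟨hx, hy, hz⟩, -⟩ := hfree.2 A hA a b b
    have hSR := clRefl_pair_map_le hR φ x y z
      (by rwa [hx, hy]) (by rw [hy, hz]; exact hR.1 b)
    have := hFhom.map_of_rel_map hFmono hX hA φ hS hR hSR hxw₁
    rwa [φ.map_eval_vec5, hx, hy, hz, ← tApp_malcevTerm] at this
  · obtain ⟨ψ, ⟨hx, hy, hz⟩, -⟩ := hfree.2 A hA a a b
    have hSR := clRefl_pair_map_le hR ψ x y z
      (by rw [hx, hy]; exact hR.1 a) (by rwa [hy, hz])
    have := hGhom.map_of_rel_map hGmono hX hA ψ hS hR hSR hw₂z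
    rwa [ψ.map_eval_vec5, hx, hy, hz, ← tApp_malcevTerm] at this

/-- Theorem 3, (vii) ⇒ (i): if in the free algebra `X` of `V` on generators
`x, y, z` one has `S ∘ S ⊆ F_X(S) ∘ S ∘ G_X(S)`, where `S` is the smallest
reflexive admissible relation containing `(x,y)` and `(y,z)`, then `V` has a
ternary term Mal'cev modulo `F_A` and `G_A` in every algebra `A` of `V`. -/
theorem stmt16 {σ : Signature} (E : EqTheory σ)
    (F G : ∀ A : UAAlgebra σ, Satisfies A E → Rel A → Rel A)
    (hF : GlobalOp E F) (hG : GlobalOp E G)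
    (hFmono : MonotoneOp E F) (hGmono : MonotoneOp E G)
    (hFhom : HomProp E F) (hGhom : HomProp E G)
    (X : UAAlgebra σ) (x y z : X.carrier) (hfree : IsFree3 E X x y z)
    (hX : Satisfies X E)
    (hSS : ∀ a c,
      comp (clRefl X (fun u v => (u = x ∧ v = y) ∨ (u = y ∧ v = z)))
        (clRefl X (fun u v => (u = x ∧ v = y) ∨ (u = y ∧ v = z))) a c →
      comp (F X hX (clRefl X (fun u v => (u = x ∧ v = y) ∨ (u = y ∧ v = z))))
        (comp (clRefl X (fun u v => (u = x ∧ v = y) ∨ (u = y ∧ v = z)))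
          (G X hX (clRefl X (fun u v => (u = x ∧ v = y) ∨ (u = y ∧ v = z))))) a c) :
    ∃ t : Term σ 3,
      ∀ (A : UAAlgebra σ) (hA : Satisfies A E), MalcevMod A (F A hA) (G A hA) t :=
  stmt16_general E F G hFmono hGmono hFhom hGhom X x y z hfree hX hSS
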